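/- arXiv:2308.15790 — 3 statements merged into one kernel-verified Lean document; each statement's English description precedes it below -/
import Mathlib

section
/- Let n ≥ 1, 0 < x < x₀ < √(2n−1), and suppose ψ is a differentiable solution on (0, x₀] of ψ'(x) = (2√(n+1)/(1+x²))·(1+ψ(x)²)·(1 − ((2n−1−x²)/(2√(n+1)·x))·ψ(x)) with ψ(x₀) > η(x₀) = 2√(n+1)·x₀/(2n−1−x₀²). Then for every x ∈ (0, x₀), ψ'(x)/(1+ψ(x)²) < 2√(n+1)/(1+x²) − (2n−1)ψ(x₀)/(x(1+x²)) + ψ(x₀)·x/(1+x²). -/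
/-!
Write `η(t) = 2ct / (m - t²)` with `c = √(n+1)`, `m = 2n - 1`, so that the equation reads
`ψ' = 2c(1 + ψ²)(1 - ψ/η) / (1 + t²)`: the solution decreases wherever it lies above `η`.
Since `η` increases on `[0, √m)`, a solution above `η` at `x₀` stays above it on all of `(0, x₀]`
(going left, `ψ` can only grow while `η` shrinks). Hence `ψ` is strictly decreasing there, so
`ψ(x) > ψ(x₀)`, and dividing the equation by `1 + ψ²` gives the bound.
-/

open Real Set

theorem lt_of_deriv_nonpos_of_monotoneOn {f g : ℝ → ℝ} {a b : ℝ}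
    (hf : ContinuousOn f (Icc a b)) (hf' : DifferentiableOn ℝ f (Ioo a b))
    (hg : ContinuousOn g (Icc a b)) (hg_mono : MonotoneOn g (Icc a b))
    (hderiv : ∀ t ∈ Ioo a b, g t < f t → deriv f t ≤ 0) (hb : g b < f b) :
    ∀ t ∈ Icc a b, g t < f t := by
  by_contra! ⟨t₁, ht₁, hle⟩
  set T := {t ∈ Icc a b | f t ≤ g t}
  have hT_bdd : BddAbove T := bddAbove_Icc.mono fun _ ht => ht.1
  have hsT : sSup T ∈ T :=
    (isClosed_Icc.isClosed_le hf hg).csSup_mem ⟨t₁, ht₁, hle⟩ hT_bdd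
  -- `s` is the last point where `f ≤ g`; on `[s, b]` `f` is antitone, so `f s ≥ f b > g b ≥ g s`.
  set s := sSup T
  have hsb : s < b := hsT.1.2.lt_of_ne fun h => (h ▸ hsT.2).not_gt hb
  have hsub : Icc s b ⊆ Icc a b := Icc_subset_Icc_left hsT.1.1
  have habove : ∀ t ∈ Ioo s b, g t < f t := fun t ht =>
    lt_of_not_ge fun h => ht.1.not_ge (le_csSup hT_bdd ⟨hsub (Ioo_subset_Icc_self ht), h⟩)
  have hanti : AntitoneOn f (Icc s b) := by
    have hint : Ioo s b ⊆ Ioo a b := Ioo_subset_Ioo_left hsT.1.1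
    refine antitoneOn_of_deriv_nonpos (convex_Icc s b) (hf.mono hsub) ?_ ?_ <;>
      rw [interior_Icc]
    · exact hf'.mono hint
    · exact fun t ht => hderiv t (hint ht) (habove t ht)
  have hs_mem : s ∈ Icc s b := left_mem_Icc.2 hsb.le
  have hb_mem : b ∈ Icc s b := right_mem_Icc.2 hsb.le
  have hf_sb : f b ≤ f s := hanti hs_mem hb_mem hsb.le
  have hg_sb : g s ≤ g b := hg_mono (hsub hs_mem) (hsub hb_mem) hsb.le
  linarith [hsT.2]

/-- With `c = √(n+1)` and `m = 2n - 1`, `odeField` is the right-hand side of the equation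
and `barrier` is `η`. -/
noncomputable def odeField (c m x y : ℝ) : ℝ :=
  2 * c / (1 + x ^ 2) * (1 + y ^ 2) * (1 - (m - x ^ 2) / (2 * c * x) * y)

noncomputable def barrier (c m x : ℝ) : ℝ := 2 * c * x / (m - x ^ 2)

section

variable {c m : ℝ}

theorem monotoneOn_barrier (hc : 0 ≤ c) {b : ℝ} (hb : b ^ 2 < m) :
    MonotoneOn (barrier c m) (Icc 0 b) := by
  intro s hs t ht hst
  have hms : 0 < m - s ^ 2 := by nlinarith [hs.1, ht.2]
  have hmt : 0 < m - t ^ 2 := by nlinarith [ht.1, ht.2]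
  rw [barrier, barrier, div_le_div_iff₀ hms hmt]
  nlinarith [mul_nonneg (mul_nonneg hc (sub_nonneg.2 hst)) (by nlinarith [hs.1, ht.1] :
    0 ≤ m + s * t)]

theorem continuousOn_barrier {b : ℝ} (hb : b ^ 2 < m) :
    ContinuousOn (barrier c m) (Icc 0 b) :=
  ContinuousOn.div (by fun_prop) (by fun_prop) fun t ht => by nlinarith [ht.1, ht.2]

theorem odeField_neg (hc : 0 < c) {x y : ℝ} (hx : 0 < x) (hxm : x ^ 2 < m)
    (hy : barrier c m x < y) : odeField c m x y < 0 := by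
  have hmx : 0 < m - x ^ 2 := sub_pos.2 hxm
  have hlt : 2 * c * x < (m - x ^ 2) * y := by
    rw [barrier, div_lt_iff₀ hmx] at hy
    linarith
  have hfactor : 1 - (m - x ^ 2) / (2 * c * x) * y < 0 := by
    rw [sub_neg, div_mul_eq_mul_div, one_lt_div (by positivity)]
    exact hlt
  exact mul_neg_of_pos_of_neg (by positivity) hfactor

theorem odeField_div_one_add_sq (hc : c ≠ 0) {x : ℝ} (hx : x ≠ 0) (y : ℝ) :
    odeField c m x y / (1 + y ^ 2) =
      2 * c / (1 + x ^ 2) - (m - x ^ 2) * y / (x * (1 + x ^ 2)) := by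
  unfold odeField
  field_simp

theorem odeField_div_one_add_sq_lt (hc : c ≠ 0) {x y₀ y : ℝ} (hx : 0 < x) (hxm : x ^ 2 < m)
    (hy : y₀ < y) :
    odeField c m x y / (1 + y ^ 2) <
      2 * c / (1 + x ^ 2) - m * y₀ / (x * (1 + x ^ 2)) + y₀ * x / (1 + x ^ 2) := by
  have hsplit : m * y₀ / (x * (1 + x ^ 2)) - y₀ * x / (1 + x ^ 2) =
      (m - x ^ 2) * y₀ / (x * (1 + x ^ 2)) := by
    field_simp
  have hmono : (m - x ^ 2) * y₀ / (x * (1 + x ^ 2)) < (m - x ^ 2) * y / (x * (1 + x ^ 2)) :=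
    div_lt_div_of_pos_right (mul_lt_mul_of_pos_left hy (sub_pos.2 hxm)) (by positivity)
  rw [odeField_div_one_add_sq hc hx.ne']
  linarith

variable {ψ : ℝ → ℝ} {x₀ : ℝ} (hc : 0 < c) (hm : x₀ ^ 2 < m)
  (hode : ∀ x ∈ Ioc 0 x₀, HasDerivAt ψ (odeField c m x (ψ x)) x)
include hc hm hode

theorem barrier_lt_of_hasDerivAt_odeField (hval : barrier c m x₀ < ψ x₀) :
    ∀ t ∈ Ioc 0 x₀, barrier c m t < ψ t := by
  intro t ht
  have hsub : Icc t x₀ ⊆ Ioc 0 x₀ := fun u hu => ⟨ht.1.trans_le hu.1, hu.2⟩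
  have hsub₀ : Icc t x₀ ⊆ Icc 0 x₀ := Icc_subset_Icc_left ht.1.le
  refine lt_of_deriv_nonpos_of_monotoneOn (fun u hu => ?_) (fun u hu => ?_)
    ((continuousOn_barrier hm).mono hsub₀) ((monotoneOn_barrier hc.le hm).mono hsub₀)
    (fun u hu hu_above => ?_) hval t (left_mem_Icc.2 ht.2)
  · exact (hode u (hsub hu)).continuousAt.continuousWithinAt
  · exact (hode u (hsub (Ioo_subset_Icc_self hu))).differentiableAt.differentiableWithinAt
  · have hu₀ := hsub (Ioo_subset_Icc_self hu)
    rw [(hode u hu₀).deriv]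
    exact (odeField_neg hc hu₀.1 (by nlinarith [hu₀.1, hu₀.2]) hu_above).le

theorem strictAntiOn_of_hasDerivAt_odeField (hval : barrier c m x₀ < ψ x₀) :
    StrictAntiOn ψ (Ioc 0 x₀) := by
  refine strictAntiOn_of_deriv_neg (convex_Ioc 0 x₀)
    (fun u hu => (hode u hu).continuousAt.continuousWithinAt) fun u hu => ?_
  rw [interior_Ioc] at hu
  have hu₀ : u ∈ Ioc 0 x₀ := Ioo_subset_Ioc_self hu
  rw [(hode u hu₀).deriv]
  exact odeField_neg hc hu₀.1 (by nlinarith [hu₀.1, hu₀.2])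
    (barrier_lt_of_hasDerivAt_odeField hc hm hode hval u hu₀)

end

theorem stmt_4_general (n : ℕ) (x₀ : ℝ) (hx₀0 : 0 < x₀)
    (hx₀1 : x₀ < Real.sqrt (2 * n - 1)) (ψ : ℝ → ℝ)
    (hode : ∀ x ∈ Set.Ioc (0:ℝ) x₀, HasDerivAt ψ
      ((2 * Real.sqrt (n + 1) / (1 + x ^ 2)) * (1 + ψ x ^ 2) *
        (1 - ((2 * n - 1 - x ^ 2) / (2 * Real.sqrt (n + 1) * x)) * ψ x)) x)
    (hval : ψ x₀ > 2 * Real.sqrt (n + 1) * x₀ / (2 * n - 1 - x₀ ^ 2)) :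
    ∀ x ∈ Set.Ioo (0:ℝ) x₀, deriv ψ x / (1 + ψ x ^ 2) <
      2 * Real.sqrt (n + 1) / (1 + x ^ 2) - (2 * n - 1) * ψ x₀ / (x * (1 + x ^ 2)) +
        ψ x₀ * x / (1 + x ^ 2) := by
  intro x hx
  have hc : 0 < Real.sqrt (n + 1) := Real.sqrt_pos.2 (by positivity)
  have hm : x₀ ^ 2 < 2 * n - 1 := (Real.lt_sqrt hx₀0.le).1 hx₀1
  have hx_mem : x ∈ Ioc 0 x₀ := Ioo_subset_Ioc_self hx
  have hψ : ψ x₀ < ψ x :=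
    strictAntiOn_of_hasDerivAt_odeField hc hm hode hval hx_mem ⟨hx₀0, le_rfl⟩ hx.2
  rw [(hode x hx_mem).deriv]
  exact odeField_div_one_add_sq_lt hc.ne' hx.1 (by nlinarith [hx.1, hx.2]) hψ

theorem stmt_4 (n : ℕ) (hn : 1 ≤ n) (x₀ : ℝ) (hx₀0 : 0 < x₀)
    (hx₀1 : x₀ < Real.sqrt (2 * n - 1)) (ψ : ℝ → ℝ)
    (hode : ∀ x ∈ Set.Ioc (0:ℝ) x₀, HasDerivAt ψ
      ((2 * Real.sqrt (n + 1) / (1 + x ^ 2)) * (1 + ψ x ^ 2) *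
        (1 - ((2 * n - 1 - x ^ 2) / (2 * Real.sqrt (n + 1) * x)) * ψ x)) x)
    (hval : ψ x₀ > 2 * Real.sqrt (n + 1) * x₀ / (2 * n - 1 - x₀ ^ 2)) :
    ∀ x ∈ Set.Ioo (0:ℝ) x₀, deriv ψ x / (1 + ψ x ^ 2) <
      2 * Real.sqrt (n + 1) / (1 + x ^ 2) - (2 * n - 1) * ψ x₀ / (x * (1 + x ^ 2)) +
        ψ x₀ * x / (1 + x ^ 2) :=
  stmt_4_general n x₀ hx₀0 hx₀1 ψ hode hval
end

section
/- Let n ≥ 1 and suppose ψ : (0, √(2n−1)) → ℝ is a differentiable solution of ψ'(x) = (2√(n+1)/(1+x²))·(1+ψ(x)²)·(1 − ((2n−1−x²)/(2√(n+1)·x))·ψ(x)). If there exists x₀ ∈ (0, √(2n−1)) with ψ(x₀) > 2√(n+1)·x₀/(2n−1−x₀²), then ψ cannot be extended to a solution on all of (0, x₀]: there is x̄₁ ∈ (0, x₀) such that ψ(x) → +∞ as x ↓ x̄₁ along any maximal solution through (x₀, ψ(x₀)). -/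
/-!
Above the nullcline `η` the right-hand side is `≤ 0`, and a solution moving leftwards cannot
cross `η`: where `ψ = η` we have `ψ' = 0 < η'`. So `ψ` is decreasing on `(b, x₀]` and bounded
below by `ψ x₀ > 0`. This makes `(arctan ψ)' ≤ c - K / x` with `K > 0`, so `arctan ψ` would
exceed `π / 2` before `x` reaches `0`; hence `b > 0`. Being monotone, `ψ` either tends to `+∞`
at `b` or to a finite limit `L`; in the second case the field is smooth near `(b, L)`, and a
local solution through `(b, L)` continues `ψ` past `b`, contradicting maximality.
-/

open Real Set Filter Topology

section ODE

variable {E : Type*} [NormedAddCommGroup E] [NormedSpace ℝ E]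

theorem ContDiffAt.exists_eq_forall_mem_Ioo_hasDerivAt_nonautonomous [CompleteSpace E]
    {v : ℝ × E → E} {t₀ : ℝ} {y₀ : E} (hv : ContDiffAt ℝ 1 v (t₀, y₀)) :
    ∃ g : ℝ → E, g t₀ = y₀ ∧ ∃ ε > 0, ∀ t ∈ Ioo (t₀ - ε) (t₀ + ε), HasDerivAt g (v (t, g t)) t := by
  -- suspend to the autonomous field `(t, y) ↦ (1, v (t, y))` on `ℝ × E`
  obtain ⟨α, hα₀, ε, hε, hα⟩ :=
    (contDiffAt_const.prodMk hv).exists_forall_mem_closedBall_exists_eq_forall_mem_Ioo_hasDerivAt₀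
      (f := fun p : ℝ × E => ((1 : ℝ), v p)) t₀
  have hmem : t₀ ∈ Ioo (t₀ - ε) (t₀ + ε) := ⟨by linarith, by linarith⟩
  have htime : EqOn (fun t => (α t).1) id (Ioo (t₀ - ε) (t₀ + ε)) :=
    ODE_solution_unique_of_mem_Ioo (v := fun _ _ => (1 : ℝ)) (s := fun _ => univ) (K := 0)
      (fun _ _ => (LipschitzWith.const (1 : ℝ)).lipschitzOnWith) hmem
      (fun t ht => ⟨(hα t ht).fst, mem_univ _⟩) (fun t _ => ⟨hasDerivAt_id t, mem_univ _⟩)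
      (by simp [hα₀])
  refine ⟨fun t => (α t).2, by simp [hα₀], ε, hε, fun t ht => ?_⟩
  have h := (hα t ht).snd
  rwa [show α t = (t, (α t).2) from Prod.ext (htime ht) rfl] at h

theorem hasDerivWithinAt_Ici_of_forall_mem_Ioc_hasDerivAt {v : ℝ × E → E} {f : ℝ → E}
    {b x₀ : ℝ} (hb : b < x₀) (hv : ContinuousAt v (b, f b))
    (hf : ∀ x ∈ Ioc b x₀, HasDerivAt f (v (x, f x)) x) (hcont : ContinuousWithinAt f (Ioi b) b) :
    HasDerivWithinAt f (v (b, f b)) (Ici b) b := by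
  have hderiv : ∀ x ∈ Ioo b x₀, HasDerivAt f (v (x, f x)) x := fun x hx =>
    hf x (Ioo_subset_Ioc_self hx)
  refine hasDerivWithinAt_Ici_of_tendsto_deriv (s := Ioo b x₀)
    (fun x hx => (hderiv x hx).differentiableAt.differentiableWithinAt)
    (hcont.mono Ioo_subset_Ioi_self) (Ioo_mem_nhdsGT hb) ?_
  have hpath : Tendsto (fun x => (x, f x)) (𝓝[>] b) (𝓝 (b, f b)) :=
    (tendsto_nhdsWithin_of_tendsto_nhds tendsto_id).prodMk_nhds hcont
  refine (hv.tendsto.comp hpath).congr' ?_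
  filter_upwards [Ioo_mem_nhdsGT hb] with x hx
  exact ((hderiv x hx).deriv).symm

theorem exists_extension_of_tendsto_nhdsGT [CompleteSpace E] {v : ℝ × E → E} {ψ : ℝ → E}
    {b x₀ : ℝ} {L : E} (hb : b < x₀) (hv : ContDiffAt ℝ 1 v (b, L))
    (hψ : ∀ x ∈ Ioc b x₀, HasDerivAt ψ (v (x, ψ x)) x) (hL : Tendsto ψ (𝓝[>] b) (𝓝 L)) :
    ∃ φ : ℝ → E, ∃ ε > 0, (∀ x ∈ Ioc (b - ε) x₀, HasDerivAt φ (v (x, φ x)) x) ∧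
      EqOn φ ψ (Ioc b x₀) := by
  obtain ⟨g, hgb, ε, hε, hg⟩ := hv.exists_eq_forall_mem_Ioo_hasDerivAt_nonautonomous
  set φ : ℝ → E := fun x => if b < x then ψ x else g x
  have hφψ : EqOn φ ψ (Ioi b) := fun x hx => if_pos hx
  have hφg : EqOn φ g (Iic b) := fun x hx => if_neg (not_lt.2 hx)
  have hright : ∀ x ∈ Ioc b x₀, HasDerivAt φ (v (x, φ x)) x := fun x hx => by
    rw [hφψ hx.1]
    exact (hψ x hx).congr_of_eventuallyEq
      (eventuallyEq_of_mem (Ioi_mem_nhds hx.1) hφψ)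
  have hφb : φ b = L := (hφg (mem_Iic.2 le_rfl)).trans hgb
  have hcont : ContinuousWithinAt φ (Ioi b) b := by
    rw [ContinuousWithinAt, hφb]
    exact hL.congr' (eventuallyEq_nhdsWithin_of_eqOn hφψ).symm
  have hbε : b ∈ Ioo (b - ε) (b + ε) := ⟨by linarith, by linarith⟩
  have hat : HasDerivAt φ (v (b, φ b)) b := by
    have hleft : HasDerivWithinAt φ (v (b, φ b)) (Iic b) b := by
      have hgL : HasDerivAt g (v (b, L)) b := hgb ▸ hg b hbε
      rw [hφb]
      exact hgL.hasDerivWithinAt.congr (fun x hx => hφg hx) (hφg (mem_Iic.2 le_rfl))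
    have hrightb : HasDerivWithinAt φ (v (b, φ b)) (Ici b) b :=
      hasDerivWithinAt_Ici_of_forall_mem_Ioc_hasDerivAt hb (by rw [hφb]; exact hv.continuousAt)
        hright hcont
    simpa only [Iic_union_Ici, hasDerivWithinAt_univ] using hleft.union hrightb
  refine ⟨φ, ε, hε, fun x hx => ?_, fun x hx => hφψ hx.1⟩
  rcases lt_trichotomy x b with hxb | rfl | hxb
  · have hxε : x ∈ Ioo (b - ε) (b + ε) := ⟨hx.1, by linarith⟩
    rw [hφg hxb.le]
    exact (hg x hxε).congr_of_eventuallyEq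
      (eventuallyEq_of_mem (Iio_mem_nhds hxb) fun y hy => hφg (mem_Iic.2 (le_of_lt hy)))
  · exact hat
  · exact hright x ⟨hxb, hx.2⟩

end ODE

theorem le_image_of_deriv_lt_deriv_boundary_left {f f' B B' : ℝ → ℝ} {a b : ℝ}
    (hf : ∀ x ∈ Ioc a b, HasDerivAt f (f' x) x) (hB : ∀ x ∈ Ioc a b, HasDerivAt B (B' x) x)
    (hb : B b ≤ f b) (bound : ∀ x ∈ Ioc a b, f x = B x → f' x < B' x) :
    ∀ x ∈ Ioc a b, B x ≤ f x := by
  intro x hx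
  -- reflect `x ↦ -x` and apply the rightward fencing theorem to `-f(-·)` below `-B(-·)`
  have reflect : ∀ {g g' : ℝ → ℝ}, (∀ x ∈ Ioc a b, HasDerivAt g (g' x) x) →
      ∀ t ∈ Icc (-b) (-x), HasDerivAt (fun t => -g (-t)) (g' (-t)) t := by
    intro g g' hg t ht
    have h := ((hg (-t) ⟨by linarith [ht.2, hx.1], by linarith [ht.1]⟩).comp t
      (hasDerivAt_neg t)).neg
    simp only [Function.comp_def, mul_neg, mul_one, neg_neg] at h
    exact h
  have key := image_le_of_deriv_right_lt_deriv_boundary' (a := -b) (b := -x)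
    (f := fun t => -f (-t)) (f' := fun t => f' (-t)) (B := fun t => -B (-t))
    (B' := fun t => B' (-t))
    (fun t ht => (reflect hf t ht).continuousAt.continuousWithinAt)
    (fun t ht => (reflect hf t (Ico_subset_Icc_self ht)).hasDerivWithinAt)
    (by simpa using hb)
    (fun t ht => (reflect hB t ht).continuousAt.continuousWithinAt)
    (fun t ht => (reflect hB t (Ico_subset_Icc_self ht)).hasDerivWithinAt)
    (fun t ht hft => bound (-t) ⟨by linarith [ht.2, hx.1], by linarith [ht.1]⟩
      (by simpa using hft))
    ⟨by linarith [hx.2], le_rfl⟩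
  simpa using key

theorem AntitoneOn.tendsto_nhdsGT_atTop_or_exists {f : ℝ → ℝ} {b c : ℝ}
    (hf : AntitoneOn f (Ioc b c)) (hbc : b < c) :
    Tendsto f (𝓝[>] b) atTop ∨ ∃ L, Tendsto f (𝓝[>] b) (𝓝 L) := by
  by_cases hbdd : BddAbove (f '' Ioo b c)
  · exact Or.inr ⟨_, (hf.mono Ioo_subset_Ioc_self).tendsto_nhdsWithin_Ioo_right
      (nonempty_Ioo.2 hbc) hbdd⟩
  · refine Or.inl (tendsto_atTop.2 fun M => ?_)
    obtain ⟨_, ⟨z, hz, rfl⟩, hMz⟩ := not_bddAbove_iff.1 hbdd M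
    filter_upwards [Ioo_mem_nhdsGT hz.1] with x hx
    exact hMz.le.trans (hf ⟨hx.1, hx.2.le.trans hz.2.le⟩ (Ioo_subset_Ioc_self hz) hx.2.le)

theorem antitoneOn_Ioc_of_hasDerivAt_nonpos {f f' : ℝ → ℝ} {b c : ℝ}
    (hf : ∀ x ∈ Ioc b c, HasDerivAt f (f' x) x) (hf' : ∀ x ∈ Ioc b c, f' x ≤ 0) :
    AntitoneOn f (Ioc b c) :=
  antitoneOn_of_hasDerivWithinAt_nonpos (convex_Ioc b c)
    (fun x hx => (hf x hx).continuousAt.continuousWithinAt)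
    (fun x hx => (hf x (interior_subset hx)).hasDerivWithinAt)
    (fun x hx => hf' x (interior_subset hx))

/-- `c` and `a` stand for the paper's `2√(n+1)` and `2n − 1`. -/
noncomputable def translatorField (c a x y : ℝ) : ℝ :=
  c / (1 + x ^ 2) * (1 + y ^ 2) * (1 - (a - x ^ 2) / (c * x) * y)

noncomputable def nullcline (c a x : ℝ) : ℝ := c * x / (a - x ^ 2)

section Translator

variable {c a x y : ℝ}

theorem hasDerivAt_nullcline (hx : a - x ^ 2 ≠ 0) :
    HasDerivAt (nullcline c a) (c * (a + x ^ 2) / (a - x ^ 2) ^ 2) x := by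
  have h : HasDerivAt (fun t => c * t / (a - t ^ 2)) _ x :=
    ((hasDerivAt_id' x).const_mul c).div ((hasDerivAt_pow 2 x).const_sub a) hx
  refine h.congr_deriv ?_
  push_cast
  ring

theorem translatorField_nullcline (hc : c ≠ 0) (hx : x ≠ 0) (hxa : a - x ^ 2 ≠ 0) :
    translatorField c a x (nullcline c a x) = 0 := by
  simp only [translatorField, nullcline]
  field_simp
  ring

theorem translatorField_nonpos (hc : 0 < c) (hx : 0 < x) (hxa : x ^ 2 < a)
    (hy : nullcline c a x ≤ y) : translatorField c a x y ≤ 0 := by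
  have hq : 0 ≤ (a - x ^ 2) / (c * x) := div_nonneg (by linarith) (by positivity)
  have h1 : 1 ≤ (a - x ^ 2) / (c * x) * y := by
    calc (1 : ℝ) = (a - x ^ 2) / (c * x) * nullcline c a x := by
          simp only [nullcline]; field_simp; exact (div_self (by linarith)).symm
      _ ≤ _ := mul_le_mul_of_nonneg_left hy hq
  exact mul_nonpos_of_nonneg_of_nonpos (by positivity) (by linarith)

theorem contDiffAt_translatorField (hc : c ≠ 0) (hx : x ≠ 0) :
    ContDiffAt ℝ 1 (fun p : ℝ × ℝ => translatorField c a p.1 p.2) (x, y) := by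
  simp only [translatorField]
  fun_prop (disch := positivity)

theorem translatorField_div_le {x₀ y₀ : ℝ} (hc : 0 < c) (hx : 0 < x) (hxx₀ : x ≤ x₀)
    (hxa : x₀ ^ 2 < a) (hy₀ : 0 < y₀) (hy : y₀ ≤ y) :
    translatorField c a x y / (1 + y ^ 2) ≤ c - (a - x₀ ^ 2) * y₀ / (1 + x₀ ^ 2) / x := by
  have hsplit : translatorField c a x y / (1 + y ^ 2) =
      c / (1 + x ^ 2) - (a - x ^ 2) / (1 + x ^ 2) * y / x := by
    simp only [translatorField]; field_simp
  have hratio : (a - x₀ ^ 2) / (1 + x₀ ^ 2) ≤ (a - x ^ 2) / (1 + x ^ 2) := by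
    have hsq : x ^ 2 ≤ x₀ ^ 2 := pow_le_pow_left₀ hx.le hxx₀ 2
    rw [div_le_div_iff₀ (by positivity) (by positivity)]
    nlinarith [mul_nonneg (sub_nonneg.2 hsq) (by nlinarith : (0 : ℝ) ≤ a + 1)]
  have hc' : c / (1 + x ^ 2) ≤ c := div_le_self hc.le (by nlinarith)
  have hK : (a - x₀ ^ 2) * y₀ / (1 + x₀ ^ 2) ≤ (a - x ^ 2) / (1 + x ^ 2) * y := by
    rw [mul_div_right_comm]
    exact mul_le_mul hratio hy hy₀.le (div_nonneg (by nlinarith) (by positivity))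
  rw [hsplit]
  have := div_le_div_of_nonneg_right hK hx.le
  linarith

end Translator

section Solutions

variable {c a b x₀ : ℝ} {ψ : ℝ → ℝ}

theorem nullcline_le_of_hasDerivAt_translatorField (hc : 0 < c) (hxa : x₀ ^ 2 < a) (hb : 0 ≤ b)
    (hψ : ∀ x ∈ Ioc b x₀, HasDerivAt ψ (translatorField c a x (ψ x)) x)
    (hval : nullcline c a x₀ ≤ ψ x₀) : ∀ x ∈ Ioc b x₀, nullcline c a x ≤ ψ x := by
  have hdom : ∀ x ∈ Ioc b x₀, 0 < x ∧ 0 < a - x ^ 2 := fun x hx =>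
    ⟨hb.trans_lt hx.1, by nlinarith [hx.1, hx.2]⟩
  refine le_image_of_deriv_lt_deriv_boundary_left hψ
    (fun x hx => hasDerivAt_nullcline (hdom x hx).2.ne') hval fun x hx hψx => ?_
  obtain ⟨hx, hxa⟩ := hdom x hx
  rw [hψx, translatorField_nullcline hc.ne' hx.ne' hxa.ne']
  exact div_pos (mul_pos hc (by nlinarith)) (pow_pos hxa 2)

theorem pos_of_hasDerivAt_translatorField (hc : 0 < c) (hx₀ : 0 < x₀) (hxa : x₀ ^ 2 < a)
    (hψ : ∀ x ∈ Ioc b x₀, HasDerivAt ψ (translatorField c a x (ψ x)) x)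
    (hψx₀ : ∀ x ∈ Ioc b x₀, ψ x₀ ≤ ψ x) (hpos : 0 < ψ x₀) : 0 < b := by
  by_contra! hb
  have hsub : Ioc 0 x₀ ⊆ Ioc b x₀ := Ioc_subset_Ioc_left hb
  set K := (a - x₀ ^ 2) * ψ x₀ / (1 + x₀ ^ 2) with hK
  have hK0 : 0 < K := div_pos (mul_pos (by linarith) hpos) (by positivity)
  -- as `x ↓ 0`, `arctan (ψ x)` grows at least like `-K log x`, contradicting `arctan < π / 2`
  set F : ℝ → ℝ := fun x => arctan (ψ x) - c * x + K * log x
  have hFanti : AntitoneOn F (Ioc 0 x₀) := by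
    refine antitoneOn_Ioc_of_hasDerivAt_nonpos
      (f' := fun x => 1 / (1 + ψ x ^ 2) * translatorField c a x (ψ x) - c * 1 + K * x⁻¹)
      (fun x hx => (((hψ x (hsub hx)).arctan).sub ((hasDerivAt_id' x).const_mul c)).add
        ((hasDerivAt_log hx.1.ne').const_mul K)) fun x hx => ?_
    have h := translatorField_div_le hc hx.1 hx.2 hxa hpos (hψx₀ x (hsub hx))
    rw [← hK, div_eq_mul_inv K] at h
    rw [one_div_mul_eq_div]
    linarith
  set x := x₀ * exp (-(π + c * x₀) / K)
  have hx : x ∈ Ioc 0 x₀ := ⟨by positivity, mul_le_of_le_one_right hx₀.le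
    (exp_le_one_iff.2 (div_nonpos_of_nonpos_of_nonneg (by nlinarith [pi_pos]) hK0.le))⟩
  have hlog : K * log x = K * log x₀ - (π + c * x₀) := by
    rw [log_mul hx₀.ne' (exp_pos _).ne', log_exp]
    field_simp
    ring
  have hFx := hFanti hx ⟨hx₀, le_rfl⟩ hx.2
  simp only [F, hlog] at hFx
  linarith [arctan_lt_pi_div_two (ψ x), neg_pi_div_two_lt_arctan (ψ x₀), mul_pos hc hx.1]

theorem pos_and_tendsto_atTop_of_maximal (hc : 0 < c) (hx₀ : 0 < x₀) (hxa : x₀ ^ 2 < a)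
    (hb : b ∈ Ico 0 x₀) (hψ : ∀ x ∈ Ioc b x₀, HasDerivAt ψ (translatorField c a x (ψ x)) x)
    (hmax : ∀ φ : ℝ → ℝ, ∀ b' ∈ Ico (0 : ℝ) b,
      (∀ x ∈ Ioc b' x₀, HasDerivAt φ (translatorField c a x (φ x)) x) → ¬ EqOn φ ψ (Ioc b x₀))
    (hval : nullcline c a x₀ ≤ ψ x₀) :
    0 < b ∧ Tendsto ψ (𝓝[>] b) atTop := by
  have habove := nullcline_le_of_hasDerivAt_translatorField hc hxa hb.1 hψ hval
  have hanti : AntitoneOn ψ (Ioc b x₀) := antitoneOn_Ioc_of_hasDerivAt_nonpos hψ fun x hx =>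
    translatorField_nonpos hc (hb.1.trans_lt hx.1) (by nlinarith [hb.1, hx.1, hx.2]) (habove x hx)
  have hx₀mem : x₀ ∈ Ioc b x₀ := ⟨hb.2, le_rfl⟩
  have hpos : 0 < ψ x₀ := (div_pos (mul_pos hc hx₀) (by linarith)).trans_le hval
  have hbpos : 0 < b := pos_of_hasDerivAt_translatorField hc hx₀ hxa hψ
    (fun x hx => hanti hx hx₀mem hx.2) hpos
  refine ⟨hbpos, (hanti.tendsto_nhdsGT_atTop_or_exists hb.2).resolve_right ?_⟩
  rintro ⟨L, hL⟩
  obtain ⟨φ, ε, hε, hφ, hφψ⟩ := exists_extension_of_tendsto_nhdsGT hb.2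
    (contDiffAt_translatorField (a := a) (y := L) hc.ne' hbpos.ne') hψ hL
  exact hmax φ (max 0 (b - ε)) ⟨le_max_left _ _, max_lt hbpos (by linarith)⟩
    (fun x hx => hφ x ⟨(le_max_right _ _).trans_lt hx.1, hx.2⟩) hφψ

end Solutions

theorem stmt_7_general (n : ℕ) (ψ : ℝ → ℝ) (x₀ b : ℝ)
    (hx₀ : x₀ ∈ Set.Ioo 0 (Real.sqrt (2 * n - 1))) (hb : b ∈ Set.Ico 0 x₀)
    (hsol : ∀ x ∈ Set.Ioc b x₀, HasDerivAt ψ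
      ((2 * Real.sqrt (n + 1) / (1 + x ^ 2)) * (1 + ψ x ^ 2) *
        (1 - ((2 * n - 1 - x ^ 2) / (2 * Real.sqrt (n + 1) * x)) * ψ x)) x)
    (hmax : ∀ (φ : ℝ → ℝ), ∀ b' ∈ Set.Ico (0:ℝ) b,
      (∀ x ∈ Set.Ioc b' x₀, HasDerivAt φ
        ((2 * Real.sqrt (n + 1) / (1 + x ^ 2)) * (1 + φ x ^ 2) *
          (1 - ((2 * n - 1 - x ^ 2) / (2 * Real.sqrt (n + 1) * x)) * φ x)) x) →
      ¬ Set.EqOn φ ψ (Set.Ioc b x₀))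
    (hval : ψ x₀ > 2 * Real.sqrt (n + 1) * x₀ / (2 * n - 1 - x₀ ^ 2)) :
    ∃ x₁ ∈ Set.Ioo (0:ℝ) x₀, x₁ = b ∧ Tendsto ψ (nhdsWithin x₁ (Set.Ioi x₁)) atTop := by
  have hc : 0 < 2 * √((n : ℝ) + 1) := mul_pos two_pos (sqrt_pos.2 (by positivity))
  have hxa : x₀ ^ 2 < 2 * n - 1 := (lt_sqrt hx₀.1.le).1 hx₀.2
  obtain ⟨hbpos, hblow⟩ :=
    pos_and_tendsto_atTop_of_maximal hc hx₀.1 hxa hb hsol hmax hval.le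
  exact ⟨b, ⟨hbpos, hb.2⟩, rfl, hblow⟩

/-- Fact (*₁): a maximal solution of the reduced translator ODE that lies above the
nullcline `η(x) = 2√(n+1)x/(2n−1−x²)` at some `x₀ ∈ (0, √(2n−1))` blows up to `+∞`
at some positive point `x̄₁ ∈ (0, x₀)` as `x ↓ x̄₁`. Here `b` is the left endpoint of
the maximal interval of existence `(b, x₀]` of the solution `ψ`. -/
theorem stmt_7 (n : ℕ) (hn : 1 ≤ n) (ψ : ℝ → ℝ) (x₀ b : ℝ)
    (hx₀ : x₀ ∈ Set.Ioo 0 (Real.sqrt (2 * n - 1))) (hb : b ∈ Set.Ico 0 x₀)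
    (hsol : ∀ x ∈ Set.Ioc b x₀, HasDerivAt ψ
      ((2 * Real.sqrt (n + 1) / (1 + x ^ 2)) * (1 + ψ x ^ 2) *
        (1 - ((2 * n - 1 - x ^ 2) / (2 * Real.sqrt (n + 1) * x)) * ψ x)) x)
    (hmax : ∀ (φ : ℝ → ℝ), ∀ b' ∈ Set.Ico (0:ℝ) b,
      (∀ x ∈ Set.Ioc b' x₀, HasDerivAt φ
        ((2 * Real.sqrt (n + 1) / (1 + x ^ 2)) * (1 + φ x ^ 2) *
          (1 - ((2 * n - 1 - x ^ 2) / (2 * Real.sqrt (n + 1) * x)) * φ x)) x) →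
      ¬ Set.EqOn φ ψ (Set.Ioc b x₀))
    (hval : ψ x₀ > 2 * Real.sqrt (n + 1) * x₀ / (2 * n - 1 - x₀ ^ 2)) :
    ∃ x₁ ∈ Set.Ioo (0:ℝ) x₀, x₁ = b ∧ Tendsto ψ (nhdsWithin x₁ (Set.Ioi x₁)) atTop :=
  stmt_7_general n ψ x₀ b hx₀ hb hsol hmax hval
end

section
/- Let Ω ⊂ ℝ² be open, X : Ω → ℝ² a C¹ vector field, F : Ω → ℝ a C¹ function, and V : Ω → ℝ a C² function with ∇V = F·X. Then the quantity Σᵢⱼ (∂²V/∂xᵢ∂xⱼ)(∂V/∂xᵢ)(∂V/∂xⱼ) − (1+|∇V|²)(Σᵢ Xᵢ ∂V/∂xᵢ + ΔV − 1) equals −X(F) + (1/2)·X(|X|²)·F³ − (1+|X|²F²)·((|X|² + div X)·F − 1) pointwise on Ω. Consequently, V satisfies the translator PDE Σᵢⱼ Vᵢⱼ VᵢVⱼ − (1+|∇V|²)(Σ XᵢVᵢ + ΔV − 1) = 0 if and only if F satisfies X(F) = (1/2)·X(|X|²)·F³ − (1+|X|²F²)·((|X|²+div X)·F − 1). -/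
open Real Set

noncomputable def pd1 (f : ℝ × ℝ → ℝ) (p : ℝ × ℝ) : ℝ := fderiv ℝ f p (1, 0)

noncomputable def pd2 (f : ℝ × ℝ → ℝ) (p : ℝ × ℝ) : ℝ := fderiv ℝ f p (0, 1)

/-! Differentiating `∇V = F X` gives `Vᵢⱼ = (∂ⱼF) Xᵢ + F ∂ⱼXᵢ`. Substituting this and `Vᵢ = F Xᵢ`
turns the translator operator into a polynomial in `F`, `X` and their first derivatives, in which
the terms `F² |X|² X(F)` cancel and `Σᵢⱼ Xᵢ Xⱼ ∂ⱼXᵢ = ½ X(|X|²)`; what remains is pure algebra. -/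

open Filter Topology

section DirectionalDerivative

variable {𝕜 E : Type*} [NontriviallyNormedField 𝕜] [NormedAddCommGroup E] [NormedSpace 𝕜 E]
  {f g : E → 𝕜} {p : E}

theorem fderiv_mul_apply (hf : DifferentiableAt 𝕜 f p) (hg : DifferentiableAt 𝕜 g p) (v : E) :
    fderiv 𝕜 (fun q => f q * g q) p v = fderiv 𝕜 f p v * g p + f p * fderiv 𝕜 g p v := by
  rw [fderiv_fun_mul hf hg]
  simp only [add_apply, smul_apply, smul_eq_mul]
  ring

theorem fderiv_sq_add_sq_apply (hf : DifferentiableAt 𝕜 f p) (hg : DifferentiableAt 𝕜 g p)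
    (v : E) :
    fderiv 𝕜 (fun q => f q ^ 2 + g q ^ 2) p v =
      2 * (f p * fderiv 𝕜 f p v + g p * fderiv 𝕜 g p v) := by
  simp only [sq]
  rw [fderiv_fun_add (hf.fun_mul hf) (hg.fun_mul hg), add_apply,
    fderiv_mul_apply hf hf, fderiv_mul_apply hg hg]
  ring

end DirectionalDerivative

noncomputable def vecDeriv (X₁ X₂ f : ℝ × ℝ → ℝ) (p : ℝ × ℝ) : ℝ :=
  X₁ p * pd1 f p + X₂ p * pd2 f p

noncomputable def divergence (X₁ X₂ : ℝ × ℝ → ℝ) (p : ℝ × ℝ) : ℝ :=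
  pd1 X₁ p + pd2 X₂ p

/-- `Σᵢⱼ Vᵢⱼ VᵢVⱼ − (1 + |∇V|²)(X(V) + ΔV − 1)`, whose vanishing is the translator PDE. -/
noncomputable def translatorOp (X₁ X₂ V : ℝ × ℝ → ℝ) (p : ℝ × ℝ) : ℝ :=
  pd1 (pd1 V) p * pd1 V p * pd1 V p + pd2 (pd1 V) p * pd1 V p * pd2 V p
    + pd1 (pd2 V) p * pd2 V p * pd1 V p + pd2 (pd2 V) p * pd2 V p * pd2 V p
  - (1 + ((pd1 V p) ^ 2 + (pd2 V p) ^ 2)) *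
      (vecDeriv X₁ X₂ V p + (pd1 (pd1 V) p + pd2 (pd2 V) p) - 1)

noncomputable def reducedTranslatorRHS (X₁ X₂ F : ℝ × ℝ → ℝ) (p : ℝ × ℝ) : ℝ :=
  (1 / 2) * vecDeriv X₁ X₂ (fun q => (X₁ q) ^ 2 + (X₂ q) ^ 2) p * (F p) ^ 3
    - (1 + ((X₁ p) ^ 2 + (X₂ p) ^ 2) * (F p) ^ 2) *
        ((((X₁ p) ^ 2 + (X₂ p) ^ 2) + divergence X₁ X₂ p) * F p - 1)

theorem translatorOp_eq_of_grad_eq_mul {X₁ X₂ F V : ℝ × ℝ → ℝ} {p : ℝ × ℝ}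
    (hX₁ : DifferentiableAt ℝ X₁ p) (hX₂ : DifferentiableAt ℝ X₂ p)
    (hF : DifferentiableAt ℝ F p)
    (hgrad : ∀ᶠ q in 𝓝 p, pd1 V q = F q * X₁ q ∧ pd2 V q = F q * X₂ q) :
    translatorOp X₁ X₂ V p = -vecDeriv X₁ X₂ F p + reducedTranslatorRHS X₁ X₂ F p := by
  have hV₁ : pd1 V =ᶠ[𝓝 p] fun q => F q * X₁ q := hgrad.mono fun _ h => h.1
  have hV₂ : pd2 V =ᶠ[𝓝 p] fun q => F q * X₂ q := hgrad.mono fun _ h => h.2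
  have hV₁₁ : pd1 (pd1 V) p = pd1 F p * X₁ p + F p * pd1 X₁ p := by
    rw [pd1, hV₁.fderiv_eq]; exact fderiv_mul_apply hF hX₁ _
  have hV₁₂ : pd2 (pd1 V) p = pd2 F p * X₁ p + F p * pd2 X₁ p := by
    rw [pd2, hV₁.fderiv_eq]; exact fderiv_mul_apply hF hX₁ _
  have hV₂₁ : pd1 (pd2 V) p = pd1 F p * X₂ p + F p * pd1 X₂ p := by
    rw [pd1, hV₂.fderiv_eq]; exact fderiv_mul_apply hF hX₂ _
  have hV₂₂ : pd2 (pd2 V) p = pd2 F p * X₂ p + F p * pd2 X₂ p := by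
    rw [pd2, hV₂.fderiv_eq]; exact fderiv_mul_apply hF hX₂ _
  have hX₁₁ : pd1 (fun q => X₁ q ^ 2 + X₂ q ^ 2) p = 2 * (X₁ p * pd1 X₁ p + X₂ p * pd1 X₂ p) :=
    fderiv_sq_add_sq_apply hX₁ hX₂ _
  have hX₂₂ : pd2 (fun q => X₁ q ^ 2 + X₂ q ^ 2) p = 2 * (X₁ p * pd2 X₁ p + X₂ p * pd2 X₂ p) :=
    fderiv_sq_add_sq_apply hX₁ hX₂ _
  obtain ⟨hV₁p, hV₂p⟩ := hgrad.self_of_nhds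
  simp only [translatorOp, reducedTranslatorRHS, vecDeriv, divergence]
  rw [hV₁₁, hV₁₂, hV₂₁, hV₂₂, hX₁₁, hX₂₂, hV₁p, hV₂p]
  ring

theorem stmt_15_general (Ω : Set (ℝ × ℝ)) (hΩ : IsOpen Ω)
    (X₁ X₂ : ℝ × ℝ → ℝ) (hX₁ : ContDiffOn ℝ 1 X₁ Ω) (hX₂ : ContDiffOn ℝ 1 X₂ Ω)
    (F : ℝ × ℝ → ℝ) (hF : ContDiffOn ℝ 1 F Ω)
    (V : ℝ × ℝ → ℝ)
    (hgrad : ∀ q ∈ Ω, pd1 V q = F q * X₁ q ∧ pd2 V q = F q * X₂ q) :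
    (∀ p ∈ Ω,
      pd1 (pd1 V) p * pd1 V p * pd1 V p + pd2 (pd1 V) p * pd1 V p * pd2 V p
        + pd1 (pd2 V) p * pd2 V p * pd1 V p + pd2 (pd2 V) p * pd2 V p * pd2 V p
      - (1 + ((pd1 V p) ^ 2 + (pd2 V p) ^ 2)) *
          (X₁ p * pd1 V p + X₂ p * pd2 V p + (pd1 (pd1 V) p + pd2 (pd2 V) p) - 1) =
      -(X₁ p * pd1 F p + X₂ p * pd2 F p)
        + (1 / 2) * (X₁ p * pd1 (fun q => (X₁ q) ^ 2 + (X₂ q) ^ 2) p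
            + X₂ p * pd2 (fun q => (X₁ q) ^ 2 + (X₂ q) ^ 2) p) * (F p) ^ 3
        - (1 + ((X₁ p) ^ 2 + (X₂ p) ^ 2) * (F p) ^ 2) *
            ((((X₁ p) ^ 2 + (X₂ p) ^ 2) + (pd1 X₁ p + pd2 X₂ p)) * F p - 1)) ∧
    ((∀ p ∈ Ω,
      pd1 (pd1 V) p * pd1 V p * pd1 V p + pd2 (pd1 V) p * pd1 V p * pd2 V p
        + pd1 (pd2 V) p * pd2 V p * pd1 V p + pd2 (pd2 V) p * pd2 V p * pd2 V p
      - (1 + ((pd1 V p) ^ 2 + (pd2 V p) ^ 2)) *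
          (X₁ p * pd1 V p + X₂ p * pd2 V p + (pd1 (pd1 V) p + pd2 (pd2 V) p) - 1) = 0)
    ↔
    (∀ p ∈ Ω,
      X₁ p * pd1 F p + X₂ p * pd2 F p =
        (1 / 2) * (X₁ p * pd1 (fun q => (X₁ q) ^ 2 + (X₂ q) ^ 2) p
            + X₂ p * pd2 (fun q => (X₁ q) ^ 2 + (X₂ q) ^ 2) p) * (F p) ^ 3
        - (1 + ((X₁ p) ^ 2 + (X₂ p) ^ 2) * (F p) ^ 2) *
            ((((X₁ p) ^ 2 + (X₂ p) ^ 2) + (pd1 X₁ p + pd2 X₂ p)) * F p - 1))) := by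
  have identity : ∀ p ∈ Ω,
      translatorOp X₁ X₂ V p = -vecDeriv X₁ X₂ F p + reducedTranslatorRHS X₁ X₂ F p := by
    intro p hp
    have hΩp : Ω ∈ 𝓝 p := hΩ.mem_nhds hp
    exact translatorOp_eq_of_grad_eq_mul
      ((hX₁.contDiffAt hΩp).differentiableAt one_ne_zero)
      ((hX₂.contDiffAt hΩp).differentiableAt one_ne_zero)
      ((hF.contDiffAt hΩp).differentiableAt one_ne_zero)
      (eventually_of_mem hΩp hgrad)
  refine ⟨fun p hp => (identity p hp).trans (add_sub_assoc _ _ _).symm, ?_⟩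
  refine forall₂_congr fun p hp => ?_
  exact (congrArg (· = 0) (identity p hp)).to_iff.trans neg_add_eq_zero

theorem stmt_15 (Ω : Set (ℝ × ℝ)) (hΩ : IsOpen Ω)
    (X₁ X₂ : ℝ × ℝ → ℝ) (hX₁ : ContDiffOn ℝ 1 X₁ Ω) (hX₂ : ContDiffOn ℝ 1 X₂ Ω)
    (F : ℝ × ℝ → ℝ) (hF : ContDiffOn ℝ 1 F Ω)
    (V : ℝ × ℝ → ℝ) (hV : ContDiffOn ℝ 2 V Ω)
    (hgrad : ∀ q ∈ Ω, pd1 V q = F q * X₁ q ∧ pd2 V q = F q * X₂ q) :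
    (∀ p ∈ Ω,
      pd1 (pd1 V) p * pd1 V p * pd1 V p + pd2 (pd1 V) p * pd1 V p * pd2 V p
        + pd1 (pd2 V) p * pd2 V p * pd1 V p + pd2 (pd2 V) p * pd2 V p * pd2 V p
      - (1 + ((pd1 V p) ^ 2 + (pd2 V p) ^ 2)) *
          (X₁ p * pd1 V p + X₂ p * pd2 V p + (pd1 (pd1 V) p + pd2 (pd2 V) p) - 1) =
      -(X₁ p * pd1 F p + X₂ p * pd2 F p)
        + (1 / 2) * (X₁ p * pd1 (fun q => (X₁ q) ^ 2 + (X₂ q) ^ 2) p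
            + X₂ p * pd2 (fun q => (X₁ q) ^ 2 + (X₂ q) ^ 2) p) * (F p) ^ 3
        - (1 + ((X₁ p) ^ 2 + (X₂ p) ^ 2) * (F p) ^ 2) *
            ((((X₁ p) ^ 2 + (X₂ p) ^ 2) + (pd1 X₁ p + pd2 X₂ p)) * F p - 1)) ∧
    ((∀ p ∈ Ω,
      pd1 (pd1 V) p * pd1 V p * pd1 V p + pd2 (pd1 V) p * pd1 V p * pd2 V p
        + pd1 (pd2 V) p * pd2 V p * pd1 V p + pd2 (pd2 V) p * pd2 V p * pd2 V p
      - (1 + ((pd1 V p) ^ 2 + (pd2 V p) ^ 2)) *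
          (X₁ p * pd1 V p + X₂ p * pd2 V p + (pd1 (pd1 V) p + pd2 (pd2 V) p) - 1) = 0)
    ↔
    (∀ p ∈ Ω,
      X₁ p * pd1 F p + X₂ p * pd2 F p =
        (1 / 2) * (X₁ p * pd1 (fun q => (X₁ q) ^ 2 + (X₂ q) ^ 2) p
            + X₂ p * pd2 (fun q => (X₁ q) ^ 2 + (X₂ q) ^ 2) p) * (F p) ^ 3
        - (1 + ((X₁ p) ^ 2 + (X₂ p) ^ 2) * (F p) ^ 2) *
            ((((X₁ p) ^ 2 + (X₂ p) ^ 2) + (pd1 X₁ p + pd2 X₂ p)) * F p - 1))) :=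
  stmt_15_general Ω hΩ X₁ X₂ hX₁ hX₂ F hF V hgrad
end
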